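/- Suppose τ = 0 in the multi-task elastic-net (multi-task group Lasso) and let c ∈ (0,1). On the event U₁ = {B̂ has at most n(1−c)/2 nonzero rows}: the interaction matrix Â is positive semidefinite with ‖Â/n‖_op ≤ |Ŝupp|/n ≤ (1−c)/2 < 1, hence ‖I_T − Â/n‖_op ≤ 1 and ‖(I_T − Â/n)⁻¹‖_op ≤ (1 − (1−c)/2)⁻¹ = 2/(1+c); consequently E[1_{U₁} · ‖(I_T − Â/n)⁻¹‖_op] ≤ 2/(1+c). -/

import Mathlib

/-!
`M` is positive semidefinite and dominates `I_T ⊗ X_ŜᵀX_Ŝ` in the Loewner order, since each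
`H^{(k)}` is a nonnegative multiple of an orthogonal projection. Because `M†` vanishes on the
coordinates outside `Ŝupp` and `X`, `X_Ŝ` agree on the others, `Â` only sees the Gram matrix
`X_ŜᵀX_Ŝ = R²` (`R` its symmetric square root), so `uᵀÂu = Σ_l (u ⊗ Re_l)ᵀ M† (u ⊗ Re_l)`,
and only the `|Ŝupp|` indices `l ∈ Ŝupp` contribute. From `(I ⊗ R)ᵀ(I ⊗ R) ≤ M` each term is at
most `‖u‖²`. Hence `0 ≤ Â/n ≤ (|Ŝupp|/n) I ≤ ((1-c)/2) I`, which gives the operator-norm bounds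
on `I_T - Â/n` and its inverse; the expectation bound holds pointwise.
-/

open MeasureTheory ProbabilityTheory Matrix Filter
open scoped BigOperators Kronecker NNReal ENNReal

noncomputable section

namespace MTS

instance matMeasurableSpace {a b : Type*} : MeasurableSpace (Matrix a b ℝ) :=
  inferInstanceAs (MeasurableSpace (a → b → ℝ))

instance matNormedAddCommGroup {a b : Type*} [Fintype a] [Fintype b] :
    NormedAddCommGroup (Matrix a b ℝ) :=
  inferInstanceAs (NormedAddCommGroup (a → b → ℝ))

instance matNormedSpace {a b : Type*} [Fintype a] [Fintype b] :
    NormedSpace ℝ (Matrix a b ℝ) :=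
  inferInstanceAs (NormedSpace ℝ (a → b → ℝ))

instance matMeasureSpace {a b : Type*} [Fintype a] [Fintype b] :
    MeasureSpace (Matrix a b ℝ) :=
  inferInstanceAs (MeasureSpace (a → b → ℝ))

/-- Squared Frobenius norm of a matrix. -/
def frobSq {a b : Type*} [Fintype a] [Fintype b] (A : Matrix a b ℝ) : ℝ :=
  ∑ i, ∑ j, A i j ^ 2

/-- Frobenius norm of a matrix. -/
def frob {a b : Type*} [Fintype a] [Fintype b] (A : Matrix a b ℝ) : ℝ :=
  Real.sqrt (frobSq A)

/-- ℓ2-operator norm of a matrix. -/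
def opNorm {a b : Type*} [Fintype a] [Fintype b] [DecidableEq b] (A : Matrix a b ℝ) : ℝ :=
  ‖LinearMap.toContinuousLinearMap (Matrix.toEuclideanLin A)‖

open Classical in
def matSqrt {p : ℕ} (A : Matrix (Fin p) (Fin p) ℝ) : Matrix (Fin p) (Fin p) ℝ :=
  if h : A.PosSemidef then
    h.1.eigenvectorUnitary.1 * Matrix.diagonal ((RCLike.ofReal : ℝ → ℝ) ∘ (Real.sqrt ∘ h.1.eigenvalues)) *
      (star h.1.eigenvectorUnitary : Matrix (Fin p) (Fin p) ℝ)
  else 0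

/-- Nuclear norm of a square matrix. -/
def nucNorm {T : ℕ} (A : Matrix (Fin T) (Fin T) ℝ) : ℝ :=
  (matSqrt (Aᵀ * A)).trace

open Classical in
def pinv {N : Type*} [Fintype N] [DecidableEq N] (M : Matrix N N ℝ) : Matrix N N ℝ :=
  if h : ∃ G : Matrix N N ℝ,
      M * G * M = M ∧ G * M * G = G ∧ (M * G)ᵀ = M * G ∧ (G * M)ᵀ = G * M
  then h.choose else 0

/-- The ℓ_{2,1} norm of a matrix: sum of the Euclidean norms of its rows. -/
def norm21 {p T : ℕ} (B : Matrix (Fin p) (Fin T) ℝ) : ℝ :=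
  ∑ j, Real.sqrt (∑ t, B j t ^ 2)

/-- The multi-task elastic-net objective function. -/
def objective {p T : ℕ} (n : ℕ) (lam tau : ℝ) (Y : Matrix (Fin n) (Fin T) ℝ)
    (X : Matrix (Fin n) (Fin p) ℝ) (B : Matrix (Fin p) (Fin T) ℝ) : ℝ :=
  (1 / (2 * (n : ℝ))) * frobSq (Y - X * B) + lam * norm21 B + (tau / 2) * frobSq B

open Classical in
def nnzRows {p T : ℕ} (B : Matrix (Fin p) (Fin T) ℝ) : ℕ :=
  (Finset.univ.filter fun j => B j ≠ 0).card

open Classical in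
def nnzVec {p : ℕ} (b : Fin p → ℝ) : ℕ :=
  (Finset.univ.filter fun j => b j ≠ 0).card

open Classical in
def rowHess {T : ℕ} (lam : ℝ) (r : Fin T → ℝ) : Matrix (Fin T) (Fin T) ℝ :=
  if r = 0 then 0
  else (lam * (Real.sqrt (∑ t, r t ^ 2))⁻¹) •
    ((1 : Matrix (Fin T) (Fin T) ℝ) - (∑ t, r t ^ 2)⁻¹ • Matrix.vecMulVec r r)

open Classical in
def Psupp {p T : ℕ} (B : Matrix (Fin p) (Fin T) ℝ) : Matrix (Fin p) (Fin p) ℝ :=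
  Matrix.of fun j k => if j = k ∧ B j ≠ 0 then (1 : ℝ) else 0

open Classical in
def Xsupp {n p T : ℕ} (X : Matrix (Fin n) (Fin p) ℝ) (B : Matrix (Fin p) (Fin T) ℝ) :
    Matrix (Fin n) (Fin p) ℝ :=
  Matrix.of fun i j => if B j ≠ 0 then X i j else 0

/-- The matrix `M = I_T ⊗ (X_ŜᵀX_Ŝ + τ n P_Ŝ) + n Σ_{k ∈ Ŝ} (H^{(k)} ⊗ e_k e_kᵀ)`. -/
def Mmat {p T : ℕ} (n : ℕ) (lam tau : ℝ) (X : Matrix (Fin n) (Fin p) ℝ)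
    (B : Matrix (Fin p) (Fin T) ℝ) : Matrix (Fin T × Fin p) (Fin T × Fin p) ℝ :=
  (1 : Matrix (Fin T) (Fin T) ℝ) ⊗ₖ ((Xsupp X B)ᵀ * Xsupp X B + (tau * n) • Psupp B)
    + (n : ℝ) • ∑ k : Fin p, (rowHess lam (B k)) ⊗ₖ (Matrix.single k k (1 : ℝ))

/-- The interaction matrix `Â = Σ_i (I_T ⊗ e_iᵀX) M† (I_T ⊗ Xᵀe_i)`, written entrywise:
`Â_{t,t'} = Σ_i Σ_j Σ_j' X_{ij} (M†)_{(t,j),(t',j')} X_{ij'}`. -/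
def Amat {p T : ℕ} (n : ℕ) (lam tau : ℝ) (X : Matrix (Fin n) (Fin p) ℝ)
    (B : Matrix (Fin p) (Fin T) ℝ) : Matrix (Fin T) (Fin T) ℝ :=
  Matrix.of fun t t' => ∑ i : Fin n, ∑ j : Fin p, ∑ j' : Fin p,
    X i j * pinv (Mmat n lam tau X B) (t, j) (t', j') * X i j'

/-- The proposed noise covariance estimator `Ŝ`. -/
def Scov {p T : ℕ} (n : ℕ) (lam tau : ℝ) (Sig : Matrix (Fin p) (Fin p) ℝ)
    (X : Matrix (Fin n) (Fin p) ℝ) (Y : Matrix (Fin n) (Fin T) ℝ)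
    (B : Matrix (Fin p) (Fin T) ℝ) : Matrix (Fin T) (Fin T) ℝ :=
  ((n : ℝ) • (1 : Matrix (Fin T) (Fin T) ℝ) - Amat n lam tau X B)⁻¹ *
    ((Y - X * B)ᵀ * ((((p : ℝ) + (n : ℝ)) • (1 : Matrix (Fin n) (Fin n) ℝ))
        - X * Sig⁻¹ * Xᵀ) * (Y - X * B)
      - Amat n lam tau X B * ((Y - X * B)ᵀ * (Y - X * B))
      - ((Y - X * B)ᵀ * (Y - X * B)) * Amat n lam tau X B) *
    ((n : ℝ) • (1 : Matrix (Fin T) (Fin T) ℝ) - Amat n lam tau X B)⁻¹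

/-- A random vector is centered Gaussian with covariance `S`: every linear functional of it
is a centered real Gaussian with the corresponding variance. -/
def IsGaussianVec {Ω : Type*} [MeasurableSpace Ω] (P : Measure Ω) {T : ℕ}
    (v : Ω → Fin T → ℝ) (S : Matrix (Fin T) (Fin T) ℝ) : Prop :=
  ∀ a : Fin T → ℝ,
    Measure.map (fun ω => ∑ t, a t * v ω t) P =
      gaussianReal 0 (Real.toNNReal (a ⬝ᵥ S.mulVec a))

/-- The rows of the random matrix `M` are i.i.d. centered Gaussian vectors with
covariance `S`. -/
def IIDGaussianRows {Ω : Type*} [MeasurableSpace Ω] (P : Measure Ω) {n T : ℕ}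
    (M : Ω → Matrix (Fin n) (Fin T) ℝ) (S : Matrix (Fin T) (Fin T) ℝ) : Prop :=
  (∀ i j, Measurable fun ω => M ω i j) ∧
    iIndepFun (fun i ω => M ω i) P ∧
    ∀ i, IsGaussianVec P (fun ω => M ω i) S

/-- All the assumptions of the multi-task linear model with multi-task elastic-net
estimator `Bhat`. -/
structure ModelHyps {n p T : ℕ} {Ω : Type*} [MeasurableSpace Ω] (P : Measure Ω)
    (Sig : Matrix (Fin p) (Fin p) ℝ) (S : Matrix (Fin T) (Fin T) ℝ)
    (Bstar : Matrix (Fin p) (Fin T) ℝ)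
    (X : Ω → Matrix (Fin n) (Fin p) ℝ) (E : Ω → Matrix (Fin n) (Fin T) ℝ)
    (lam tau : ℝ) (Bhat : Ω → Matrix (Fin p) (Fin T) ℝ) : Prop where
  prob : IsProbabilityMeasure P
  hn : 0 < n
  hp : 0 < p
  hT : 0 < T
  hSig : Sig.PosDef
  hS : S.PosSemidef
  hX : IIDGaussianRows P X Sig
  hE : IIDGaussianRows P E S
  indep : IndepFun X E P
  hlam : 0 ≤ lam
  htau : 0 ≤ tau
  hBhat_meas : Measurable Bhat
  hBhat_min : ∀ ω B, objective n lam tau (X ω * Bstar + E ω) (X ω) (Bhat ω)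
      ≤ objective n lam tau (X ω * Bstar + E ω) (X ω) B

/-- The event `U₁` that `B̂` has at most `n(1-c)/2` nonzero rows. -/
def U1set {p T : ℕ} {Ω : Type*} (Bhat : Ω → Matrix (Fin p) (Fin T) ℝ) (n : ℕ) (c : ℝ) :
    Set Ω :=
  {ω | (nnzRows (Bhat ω) : ℝ) ≤ (n : ℝ) * (1 - c) / 2}

/-- Smallest eigenvalue of a symmetric matrix (junk value `0` otherwise). -/
def eigMin {p : ℕ} (A : Matrix (Fin p) (Fin p) ℝ) : ℝ :=
  if h : A.IsHermitian then ⨅ i, h.eigenvalues i else 0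


/-- Residual matrix `F = Y - XB` with `Y = XB* + E`. -/
def resid {n p T : ℕ} (Bstar : Matrix (Fin p) (Fin T) ℝ) (X : Matrix (Fin n) (Fin p) ℝ)
    (E : Matrix (Fin n) (Fin T) ℝ) (B : Matrix (Fin p) (Fin T) ℝ) :
    Matrix (Fin n) (Fin T) ℝ :=
  X * Bstar + E - X * B

/-- Error matrix `H = Σ^{1/2}(B - B*)`. -/
def herr {p T : ℕ} (Sig : Matrix (Fin p) (Fin p) ℝ) (Bstar B : Matrix (Fin p) (Fin T) ℝ) :
    Matrix (Fin p) (Fin T) ℝ :=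
  matSqrt Sig * (B - Bstar)

/-- The matrix `I_T - Â/n`. -/
def ImA {p T : ℕ} (n : ℕ) (lam tau : ℝ) (X : Matrix (Fin n) (Fin p) ℝ)
    (B : Matrix (Fin p) (Fin T) ℝ) : Matrix (Fin T) (Fin T) ℝ :=
  (1 : Matrix (Fin T) (Fin T) ℝ) - (n : ℝ)⁻¹ • Amat n lam tau X B

/-- Residual as a function of `Z`, where `X = ZΣ^{1/2}` and `Y = XB* + E`. -/
def Fz {n p T : ℕ} (Sig : Matrix (Fin p) (Fin p) ℝ) (Bstar : Matrix (Fin p) (Fin T) ℝ)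
    (E : Matrix (Fin n) (Fin T) ℝ) (Z : Matrix (Fin n) (Fin p) ℝ)
    (B : Matrix (Fin p) (Fin T) ℝ) : Matrix (Fin n) (Fin T) ℝ :=
  Z * matSqrt Sig * Bstar + E - Z * matSqrt Sig * B

/-- `D(Z) = (‖H(Z)‖_F² + ‖F(Z)‖_F²/n)^{1/2}`. -/
def Dz {n p T : ℕ} (Sig : Matrix (Fin p) (Fin p) ℝ) (Bstar : Matrix (Fin p) (Fin T) ℝ)
    (E : Matrix (Fin n) (Fin T) ℝ) (Z : Matrix (Fin n) (Fin p) ℝ)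
    (B : Matrix (Fin p) (Fin T) ℝ) : ℝ :=
  Real.sqrt (frob (herr Sig Bstar B) ^ 2 + frob (Fz Sig Bstar E Z B) ^ 2 / (n : ℝ))

/-- The distribution of an `n × p` random matrix with i.i.d. standard Gaussian entries. -/
def stdGaussMat (n p : ℕ) : Measure (Matrix (Fin n) (Fin p) ℝ) :=
  Measure.pi fun _ : Fin n => Measure.pi fun _ : Fin p => gaussianReal 0 1

/-- The method-of-moments estimator of the noise covariance. -/
def SmmEst {T : ℕ} (n p : ℕ) (Sig : Matrix (Fin p) (Fin p) ℝ)
    (X : Matrix (Fin n) (Fin p) ℝ) (Y : Matrix (Fin n) (Fin T) ℝ) :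
    Matrix (Fin T) (Fin T) ℝ :=
  (((n : ℝ) + 1 + (p : ℝ)) / ((n : ℝ) * ((n : ℝ) + 1))) • (Yᵀ * Y)
    - (1 / ((n : ℝ) * ((n : ℝ) + 1))) • (Yᵀ * X * Sig⁻¹ * Xᵀ * Y)

theorem le_of_sq_le_mul {a b : ℝ} (hb : 0 ≤ b) (h : a ^ 2 ≤ a * b) : a ≤ b := by
  nlinarith

theorem transpose_apply_eq_zero_of_transpose_mul_self_diag {ι m : Type*} [Fintype m]
    {Z : Matrix m ι ℝ} {l : ι} (h : (Zᵀ * Z) l l = 0) : Zᵀ l = 0 :=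
  dotProduct_self_eq_zero.mp h

section QuadraticForm

variable {ι : Type*} [Fintype ι]

theorem posSemidef_iff_dotProduct_mulVec_real {A : Matrix ι ι ℝ} :
    A.PosSemidef ↔ A.IsHermitian ∧ ∀ x, 0 ≤ x ⬝ᵥ A *ᵥ x := by
  simp [posSemidef_iff_dotProduct_mulVec]

theorem dotProduct_self_nonneg (x : ι → ℝ) : 0 ≤ x ⬝ᵥ x :=
  Finset.sum_nonneg fun i _ => mul_self_nonneg (x i)

theorem sq_dotProduct_le (x y : ι → ℝ) : (x ⬝ᵥ y) ^ 2 ≤ (x ⬝ᵥ x) * (y ⬝ᵥ y) := by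
  simpa [dotProduct, pow_two] using Finset.sum_mul_sq_le_sq_mul_sq Finset.univ x y

theorem dotProduct_transpose_mulVec {κ : Type*} [Fintype κ] (S : Matrix κ ι ℝ) (x : ι → ℝ)
    (w : κ → ℝ) : x ⬝ᵥ Sᵀ *ᵥ w = (S *ᵥ x) ⬝ᵥ w := by
  rw [dotProduct_mulVec, vecMul_transpose]

theorem posSemidef_transpose_mul_self {m : Type*} [Fintype m] (Z : Matrix m ι ℝ) :
    (Zᵀ * Z).PosSemidef := by
  simpa using posSemidef_conjTranspose_mul_self Z

open scoped MatrixOrder in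
theorem sq_dotProduct_mulVec_le {A : Matrix ι ι ℝ} (hA : A.PosSemidef) (x y : ι → ℝ) :
    (x ⬝ᵥ A *ᵥ y) ^ 2 ≤ (x ⬝ᵥ A *ᵥ x) * (y ⬝ᵥ A *ᵥ y) := by
  classical
  obtain ⟨B, rfl⟩ := CStarAlgebra.nonneg_iff_eq_star_mul_self.mp hA.nonneg
  have h (u v : ι → ℝ) : u ⬝ᵥ (star B * B) *ᵥ v = (B *ᵥ u) ⬝ᵥ (B *ᵥ v) := by
    rw [← mulVec_mulVec, dotProduct_mulVec, star_eq_conjTranspose, vecMul_conjTranspose]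
    simp
  simpa only [h] using sq_dotProduct_le (B *ᵥ x) (B *ᵥ y)

theorem apply_eq_zero_of_diag_eq_zero {A : Matrix ι ι ℝ} (hA : A.PosSemidef) {a : ι}
    (ha : A a a = 0) (b : ι) : A b a = 0 := by
  classical
  have := (hA.dotProduct_mulVec_zero_iff (Pi.single a 1)).1 (by simp [ha])
  simpa using congrFun this b

open scoped MatrixOrder in
theorem exists_symm_transpose_mul_self_eq {K : Matrix ι ι ℝ} (hK : K.PosSemidef) :
    ∃ R : Matrix ι ι ℝ, Rᵀ = R ∧ Rᵀ * R = K := by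
  classical
  have hR : (CFC.sqrt K)ᵀ = CFC.sqrt K :=
    (isHermitian_iff_isSymm.1 (CFC.sqrt_nonneg K).posSemidef.1).eq
  exact ⟨CFC.sqrt K, hR, by rw [hR]; exact CFC.sqrt_mul_sqrt_self K hK.nonneg⟩

end QuadraticForm

section PseudoInverse

variable {ι : Type*} [Fintype ι] {M G : Matrix ι ι ℝ}

def IsMoorePenroseInverse (M G : Matrix ι ι ℝ) : Prop :=
  M * G * M = M ∧ G * M * G = G ∧ (M * G)ᵀ = M * G ∧ (G * M)ᵀ = G * M

theorem IsMoorePenroseInverse.unique {G' : Matrix ι ι ℝ} (h : IsMoorePenroseInverse M G)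
    (h' : IsMoorePenroseInverse M G') : G = G' := by
  obtain ⟨h₁, h₂, h₃, h₄⟩ := h
  obtain ⟨h₁', h₂', h₃', h₄'⟩ := h'
  have hleft : M * G = M * G' := calc
    M * G = (M * G' * M * G)ᵀ := by rw [h₁', h₃]
    _ = (M * G)ᵀ * (M * G')ᵀ := by simp only [transpose_mul, Matrix.mul_assoc]
    _ = M * G' := by rw [h₃, h₃', ← Matrix.mul_assoc, h₁]
  have hright : G * M = G' * M := calc
    G * M = (G * (M * G' * M))ᵀ := by rw [h₁', h₄]
    _ = (G' * M)ᵀ * (G * M)ᵀ := by simp only [transpose_mul, Matrix.mul_assoc]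
    _ = G' * M := by rw [h₄, h₄', Matrix.mul_assoc, ← Matrix.mul_assoc M, h₁]
  rw [← h₂, hright, Matrix.mul_assoc, hleft, ← Matrix.mul_assoc, h₂']

variable [DecidableEq ι]

theorem transpose_cfc (f : ℝ → ℝ) (M : Matrix ι ι ℝ) : (cfc f M)ᵀ = cfc f M := by
  simpa [IsSelfAdjoint, star_eq_conjTranspose] using IsSelfAdjoint.cfc (f := f) (a := M)

/- Since `0⁻¹ = 0` in `ℝ`, applying `x ↦ x⁻¹` to the spectrum inverts `M` on its range and
kills its kernel. -/
theorem isMoorePenroseInverse_cfc_inv (hM : M.IsHermitian) :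
    IsMoorePenroseInverse M (cfc (·⁻¹ : ℝ → ℝ) M) := by
  have hmul (f g : ℝ → ℝ) : cfc f M * cfc g M = cfc (fun x => f x * g x) M :=
    (cfc_mul f g M (M.finite_spectrum.continuousOn f) (M.finite_spectrum.continuousOn g)).symm
  have hid : cfc (fun x : ℝ => x) M = M := cfc_id' ℝ M hM.isSelfAdjoint
  refine ⟨?_, ?_, ?_, ?_⟩
  · calc M * cfc (·⁻¹) M * M = cfc (fun x => x) M * cfc (·⁻¹) M * cfc (fun x => x) M := by
          rw [hid]
      _ = M := by rw [hmul, hmul]; simp only [mul_inv_mul_cancel, hid]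
  · calc cfc (·⁻¹) M * M * cfc (·⁻¹) M = cfc (·⁻¹) M * cfc (fun x => x) M * cfc (·⁻¹) M := by
          rw [hid]
      _ = cfc (·⁻¹) M := by
          rw [hmul, hmul]
          congr 1 with x
          simpa using mul_inv_mul_cancel x⁻¹
  · have h := hmul (fun x => x) (·⁻¹)
    rw [hid] at h
    rw [h, transpose_cfc]
  · have h := hmul (·⁻¹) (fun x => x)
    rw [hid] at h
    rw [h, transpose_cfc]

theorem pinv_eq_cfc_inv (hM : M.IsHermitian) : pinv M = cfc (·⁻¹ : ℝ → ℝ) M := by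
  have h := isMoorePenroseInverse_cfc_inv hM
  have hex : ∃ G, IsMoorePenroseInverse M G := ⟨_, h⟩
  rw [pinv]
  exact (dif_pos hex).trans (hex.choose_spec.unique h)

theorem isMoorePenroseInverse_pinv (hM : M.IsHermitian) : IsMoorePenroseInverse M (pinv M) :=
  pinv_eq_cfc_inv hM ▸ isMoorePenroseInverse_cfc_inv hM

theorem transpose_pinv (hM : M.IsHermitian) : (pinv M)ᵀ = pinv M :=
  pinv_eq_cfc_inv hM ▸ transpose_cfc _ M

theorem pinv_mul_pinv_mul (hM : M.IsHermitian) : pinv M * pinv M * M = pinv M := by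
  obtain ⟨-, h₂, h₃, -⟩ := isMoorePenroseInverse_pinv hM
  calc pinv M * pinv M * M = pinv M * (M * pinv M)ᵀ := by
        rw [transpose_mul, transpose_pinv hM, (isHermitian_iff_isSymm.1 hM).eq, mul_assoc]
    _ = pinv M := by rw [h₃, ← mul_assoc, h₂]

theorem pinv_apply_eq_zero (hM : M.IsHermitian) {a : ι} (ha : ∀ b, M b a = 0) (b : ι) :
    pinv M b a = 0 := by
  rw [← pinv_mul_pinv_mul hM, mul_apply]
  exact Finset.sum_eq_zero fun c _ => by rw [ha c, mul_zero]

theorem dotProduct_pinv_mulVec (hM : M.IsHermitian) (v : ι → ℝ) :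
    v ⬝ᵥ pinv M *ᵥ v = (pinv M *ᵥ v) ⬝ᵥ M *ᵥ (pinv M *ᵥ v) := by
  conv_lhs => rw [← (isMoorePenroseInverse_pinv hM).2.1]
  rw [← mulVec_mulVec, ← mulVec_mulVec, dotProduct_mulVec v (pinv M), ← mulVec_transpose,
    transpose_pinv hM]

theorem posSemidef_pinv (hM : M.PosSemidef) : (pinv M).PosSemidef := by
  refine posSemidef_iff_dotProduct_mulVec_real.2
    ⟨isHermitian_iff_isSymm.2 (transpose_pinv hM.1), fun v => ?_⟩
  rw [dotProduct_pinv_mulVec hM.1]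
  exact (posSemidef_iff_dotProduct_mulVec_real.1 hM).2 _

theorem dotProduct_pinv_mulVec_le (hM : M.PosSemidef) {v : ι → ℝ} {c : ℝ} (hc : 0 ≤ c)
    (h : ∀ x, (x ⬝ᵥ v) ^ 2 ≤ c * (x ⬝ᵥ M *ᵥ x)) : v ⬝ᵥ pinv M *ᵥ v ≤ c := by
  refine le_of_sq_le_mul hc ?_
  have := h (pinv M *ᵥ v)
  rwa [← dotProduct_pinv_mulVec hM.1, dotProduct_comm, mul_comm] at this

theorem dotProduct_pinv_mulVec_le_of_posSemidef_sub {κ : Type*} [Fintype κ]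
    (hM : M.PosSemidef) {S : Matrix κ ι ℝ} (hS : (M - Sᵀ * S).PosSemidef) (w : κ → ℝ) :
    (Sᵀ *ᵥ w) ⬝ᵥ pinv M *ᵥ (Sᵀ *ᵥ w) ≤ w ⬝ᵥ w := by
  refine dotProduct_pinv_mulVec_le hM (dotProduct_self_nonneg w) fun x => ?_
  have hSx : (S *ᵥ x) ⬝ᵥ (S *ᵥ x) ≤ x ⬝ᵥ M *ᵥ x := by
    have := (posSemidef_iff_dotProduct_mulVec_real.1 hS).2 x
    rwa [sub_mulVec, dotProduct_sub, ← mulVec_mulVec, dotProduct_transpose_mulVec, sub_nonneg]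
      at this
  calc (x ⬝ᵥ Sᵀ *ᵥ w) ^ 2 = ((S *ᵥ x) ⬝ᵥ w) ^ 2 := by rw [dotProduct_transpose_mulVec]
    _ ≤ ((S *ᵥ x) ⬝ᵥ (S *ᵥ x)) * (w ⬝ᵥ w) := sq_dotProduct_le _ _
    _ ≤ (w ⬝ᵥ w) * (x ⬝ᵥ M *ᵥ x) := by
      rw [mul_comm]
      exact mul_le_mul_of_nonneg_left hSx (dotProduct_self_nonneg w)

end PseudoInverse

section OperatorNorm

variable {ι κ : Type*} [Fintype ι] [Fintype κ]

theorem norm_sq_eq_dotProduct (w : EuclideanSpace ℝ ι) : ‖w‖ ^ 2 = w.ofLp ⬝ᵥ w.ofLp := by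
  rw [EuclideanSpace.real_norm_sq_eq]
  simp [dotProduct, pow_two]

variable [DecidableEq ι]

theorem opNorm_nonneg (A : Matrix κ ι ℝ) : 0 ≤ opNorm A :=
  norm_nonneg _

theorem opNorm_le_of_dotProduct_le {A : Matrix κ ι ℝ} {C : ℝ} (hC : 0 ≤ C)
    (h : ∀ x, (A *ᵥ x) ⬝ᵥ (A *ᵥ x) ≤ C ^ 2 * (x ⬝ᵥ x)) : opNorm A ≤ C := by
  refine ContinuousLinearMap.opNorm_le_bound _ hC fun v => ?_
  rw [← pow_le_pow_iff_left₀ (norm_nonneg _) (by positivity) two_ne_zero, mul_pow,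
    norm_sq_eq_dotProduct v, LinearMap.coe_toContinuousLinearMap', toLpLin_apply,
    norm_sq_eq_dotProduct]
  exact h v.ofLp

theorem opNorm_le_of_posSemidef {A : Matrix ι ι ℝ} {C : ℝ} (hA : A.PosSemidef) (hC : 0 ≤ C)
    (h : ∀ x, x ⬝ᵥ A *ᵥ x ≤ C * (x ⬝ᵥ x)) : opNorm A ≤ C := by
  refine opNorm_le_of_dotProduct_le hC fun x => ?_
  have hAx := dotProduct_self_nonneg (A *ᵥ x)
  refine le_of_sq_le_mul (by positivity [dotProduct_self_nonneg x]) ?_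
  calc ((A *ᵥ x) ⬝ᵥ (A *ᵥ x)) ^ 2 ≤ ((A *ᵥ x) ⬝ᵥ A *ᵥ (A *ᵥ x)) * (x ⬝ᵥ A *ᵥ x) :=
        sq_dotProduct_mulVec_le hA (A *ᵥ x) x
    _ ≤ (C * ((A *ᵥ x) ⬝ᵥ (A *ᵥ x))) * (C * (x ⬝ᵥ x)) :=
        mul_le_mul (h _) (h x) ((posSemidef_iff_dotProduct_mulVec_real.1 hA).2 x)
          (by positivity)
    _ = ((A *ᵥ x) ⬝ᵥ (A *ᵥ x)) * (C ^ 2 * (x ⬝ᵥ x)) := by ring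

theorem opNorm_inv_le {A : Matrix ι ι ℝ} {ε : ℝ} (hε : 0 < ε)
    (h : ∀ x, ε * (x ⬝ᵥ x) ≤ x ⬝ᵥ A *ᵥ x) : opNorm A⁻¹ ≤ ε⁻¹ := by
  have hA : IsUnit A := by
    refine mulVec_injective_iff_isUnit.mp fun x y hxy => ?_
    have h0 : A *ᵥ (x - y) = 0 := by rw [mulVec_sub, hxy, sub_self]
    have := h (x - y)
    rw [h0, dotProduct_zero] at this
    exact sub_eq_zero.mp (dotProduct_self_eq_zero.mp
      (le_antisymm (nonpos_of_mul_nonpos_right this hε) (dotProduct_self_nonneg _)))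
  refine opNorm_le_of_dotProduct_le (inv_nonneg.mpr hε.le) fun y => ?_
  set x := A⁻¹ *ᵥ y
  have hxy : ε * (x ⬝ᵥ x) ≤ x ⬝ᵥ y := by
    simpa [x, mulVec_mulVec, mul_nonsing_inv A ((isUnit_iff_isUnit_det A).mp hA)] using h x
  have hx := dotProduct_self_nonneg x
  have hy := dotProduct_self_nonneg y
  have key : ε ^ 2 * (x ⬝ᵥ x) ≤ y ⬝ᵥ y := by
    refine le_of_sq_le_mul hy ?_
    nlinarith [sq_dotProduct_le x y,
      mul_le_mul hxy hxy (by positivity) (hxy.trans' (by positivity))]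
  rw [inv_pow, ← div_eq_inv_mul, le_div_iff₀ (by positivity)]
  linarith

theorem dotProduct_one_sub_mulVec (A : Matrix ι ι ℝ) (x : ι → ℝ) :
    x ⬝ᵥ (1 - A) *ᵥ x = x ⬝ᵥ x - x ⬝ᵥ A *ᵥ x := by
  rw [sub_mulVec, one_mulVec, dotProduct_sub]

theorem opNorm_one_sub_le_one {A : Matrix ι ι ℝ} (hA : A.PosSemidef)
    (h : ∀ x, x ⬝ᵥ A *ᵥ x ≤ x ⬝ᵥ x) : opNorm (1 - A) ≤ 1 := by
  refine opNorm_le_of_posSemidef ?_ zero_le_one fun x => ?_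
  · refine posSemidef_iff_dotProduct_mulVec_real.2 ⟨isHermitian_one.sub hA.1, fun x => ?_⟩
    rw [dotProduct_one_sub_mulVec, sub_nonneg]
    exact h x
  · rw [dotProduct_one_sub_mulVec, one_mul, sub_le_self_iff]
    exact (posSemidef_iff_dotProduct_mulVec_real.1 hA).2 x

theorem opNorm_inv_one_sub_le {A : Matrix ι ι ℝ} {q : ℝ} (hq : q < 1)
    (h : ∀ x, x ⬝ᵥ A *ᵥ x ≤ q * (x ⬝ᵥ x)) : opNorm (1 - A)⁻¹ ≤ (1 - q)⁻¹ :=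
  opNorm_inv_le (sub_pos.mpr hq) fun x => by
    rw [dotProduct_one_sub_mulVec, sub_mul, one_mul]
    linarith [h x]

end OperatorNorm

section KroneckerVector

variable {ι κ ι' κ' : Type*}

def kronVec (u : ι → ℝ) (z : κ → ℝ) : ι × κ → ℝ := fun α => u α.1 * z α.2

@[simp]
theorem kronVec_zero (u : ι → ℝ) : kronVec u (0 : κ → ℝ) = 0 := by
  ext
  simp [kronVec]

variable [Fintype ι] [Fintype κ]

theorem kronecker_mulVec_kronVec (A : Matrix ι' ι ℝ) (B : Matrix κ' κ ℝ) (u : ι → ℝ)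
    (z : κ → ℝ) : (A ⊗ₖ B) *ᵥ kronVec u z = kronVec (A *ᵥ u) (B *ᵥ z) := by
  ext ⟨t, j⟩
  simp only [kronVec, mulVec, dotProduct, Fintype.sum_prod_type, kroneckerMap_apply,
    Finset.sum_mul_sum]
  exact Finset.sum_congr rfl fun _ _ => Finset.sum_congr rfl fun _ _ => by ring

theorem kronVec_dotProduct_kronVec (u u' : ι → ℝ) (z z' : κ → ℝ) :
    kronVec u z ⬝ᵥ kronVec u' z' = (u ⬝ᵥ u') * (z ⬝ᵥ z') := by
  simp only [kronVec, dotProduct, Fintype.sum_prod_type, Finset.sum_mul_sum]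
  exact Finset.sum_congr rfl fun _ _ => Finset.sum_congr rfl fun _ _ => by ring

end KroneckerVector

section GramContraction

variable {ι κ m : Type*} [Fintype κ] [Fintype m] {G : Matrix (ι × κ) (ι × κ) ℝ}

/- `Σᵢ (I ⊗ zᵢᵀ) G (I ⊗ zᵢ)` over the rows `zᵢ` of `Z`. -/
def gramContract (G : Matrix (ι × κ) (ι × κ) ℝ) (Z : Matrix m κ ℝ) : Matrix ι ι ℝ :=
  of fun t t' => ∑ i, ∑ j, ∑ j', Z i j * G (t, j) (t', j') * Z i j'

theorem gramContract_apply (Z : Matrix m κ ℝ) (t t' : ι) :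
    gramContract G Z t t' = ∑ j, ∑ j', (Zᵀ * Z) j j' * G (t, j) (t', j') := by
  simp only [gramContract, of_apply, mul_apply, transpose_apply, Finset.sum_mul]
  rw [Finset.sum_comm]
  refine Finset.sum_congr rfl fun j _ => ?_
  rw [Finset.sum_comm]
  exact Finset.sum_congr rfl fun _ _ => Finset.sum_congr rfl fun _ _ => by ring

theorem gramContract_congr {m' : Type*} [Fintype m'] {Z : Matrix m κ ℝ} {Z' : Matrix m' κ ℝ}
    (h : ∀ t t' j j', G (t, j) (t', j') ≠ 0 → (Zᵀ * Z) j j' = (Z'ᵀ * Z') j j') :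
    gramContract G Z = gramContract G Z' := by
  ext t t'
  simp only [gramContract_apply]
  refine Finset.sum_congr rfl fun j _ => Finset.sum_congr rfl fun j' _ => ?_
  by_cases hG : G (t, j) (t', j') = 0
  · simp [hG]
  · rw [h t t' j j' hG]

theorem transpose_gramContract (hG : Gᵀ = G) (Z : Matrix m κ ℝ) :
    (gramContract G Z)ᵀ = gramContract G Z := by
  ext t t'
  simp only [transpose_apply, gramContract, of_apply]
  refine Finset.sum_congr rfl fun i _ => ?_
  rw [Finset.sum_comm]
  refine Finset.sum_congr rfl fun j _ => Finset.sum_congr rfl fun j' _ => ?_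
  rw [← congrFun (congrFun hG (t', j')) (t, j), transpose_apply]
  ring

variable [Fintype ι]

theorem dotProduct_gramContract_mulVec (Z : Matrix m κ ℝ) (u : ι → ℝ) :
    u ⬝ᵥ gramContract G Z *ᵥ u = ∑ i, kronVec u (Z i) ⬝ᵥ G *ᵥ kronVec u (Z i) := by
  simp only [gramContract, kronVec, dotProduct, mulVec, of_apply, Fintype.sum_prod_type,
    Finset.mul_sum, Finset.sum_mul]
  refine (Finset.sum_congr rfl fun t _ => Finset.sum_comm).trans (Finset.sum_comm.trans
    (Finset.sum_congr rfl fun i _ => Finset.sum_congr rfl fun t _ => Finset.sum_comm.trans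
      (Finset.sum_congr rfl fun j _ => Finset.sum_congr rfl fun t' _ =>
        Finset.sum_congr rfl fun j' _ => by ring)))

theorem posSemidef_gramContract (hG : G.PosSemidef) (Z : Matrix m κ ℝ) :
    (gramContract G Z).PosSemidef := by
  refine posSemidef_iff_dotProduct_mulVec_real.2 ⟨isHermitian_iff_isSymm.2
    (transpose_gramContract (isHermitian_iff_isSymm.1 hG.1).eq Z), fun u => ?_⟩
  rw [dotProduct_gramContract_mulVec]
  exact Finset.sum_nonneg fun i _ => (posSemidef_iff_dotProduct_mulVec_real.1 hG).2 _

end GramContraction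

section GroupLasso

variable {n p T : ℕ} {lam : ℝ}

theorem posSemidef_rowHess (hlam : 0 ≤ lam) (r : Fin T → ℝ) : (rowHess lam r).PosSemidef := by
  unfold rowHess
  split_ifs with hr
  · exact PosSemidef.zero
  refine PosSemidef.smul ?_ (by positivity)
  have hs : 0 < r ⬝ᵥ r := dotProduct_self_star_pos_iff.mpr hr
  rw [show ∑ t, r t ^ 2 = r ⬝ᵥ r by simp [dotProduct, pow_two]]
  refine posSemidef_iff_dotProduct_mulVec_real.2 ⟨isHermitian_iff_isSymm.2 (by simp [IsSymm]),
    fun y => ?_⟩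
  have hq : y ⬝ᵥ (1 - (r ⬝ᵥ r)⁻¹ • vecMulVec r r) *ᵥ y
      = y ⬝ᵥ y - (r ⬝ᵥ r)⁻¹ * (r ⬝ᵥ y) ^ 2 := by
    simp [sub_mulVec, Matrix.smul_mulVec, vecMulVec_mulVec, dotProduct_comm y r, pow_two]
  rw [hq, sub_nonneg, inv_mul_le_iff₀ hs]
  exact sq_dotProduct_le r y

theorem Mmat_tau_zero (lam : ℝ) (X : Matrix (Fin n) (Fin p) ℝ) (B : Matrix (Fin p) (Fin T) ℝ) :
    Mmat n lam 0 X B = 1 ⊗ₖ ((Xsupp X B)ᵀ * Xsupp X B)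
      + (n : ℝ) • ∑ k, rowHess lam (B k) ⊗ₖ single k k (1 : ℝ) := by
  simp [Mmat]

theorem posSemidef_Mmat_sub_kronecker_gram (hlam : 0 ≤ lam) (X : Matrix (Fin n) (Fin p) ℝ)
    (B : Matrix (Fin p) (Fin T) ℝ) :
    (Mmat n lam 0 X B - 1 ⊗ₖ ((Xsupp X B)ᵀ * Xsupp X B)).PosSemidef := by
  rw [Mmat_tau_zero, add_sub_cancel_left]
  refine PosSemidef.smul (posSemidef_sum Finset.univ fun k _ =>
    (posSemidef_rowHess hlam _).kronecker ?_) (Nat.cast_nonneg n)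
  rw [← diagonal_single]
  exact PosSemidef.diagonal (Pi.single_nonneg.2 zero_le_one)

theorem posSemidef_Mmat (hlam : 0 ≤ lam) (X : Matrix (Fin n) (Fin p) ℝ)
    (B : Matrix (Fin p) (Fin T) ℝ) : (Mmat n lam 0 X B).PosSemidef := by
  have h := ((PosSemidef.one (n := Fin T)).kronecker
    (posSemidef_transpose_mul_self (Xsupp X B))).add (posSemidef_Mmat_sub_kronecker_gram hlam X B)
  rwa [add_sub_cancel] at h

theorem Mmat_apply_self_eq_zero (X : Matrix (Fin n) (Fin p) ℝ) {B : Matrix (Fin p) (Fin T) ℝ}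
    {j : Fin p} (hB : B j = 0) (t : Fin T) : Mmat n lam 0 X B (t, j) (t, j) = 0 := by
  simp [Mmat_tau_zero, Matrix.sum_apply, mul_apply, Xsupp, hB, kroneckerMap_apply, single_apply,
    rowHess]

theorem pinv_Mmat_apply_eq_zero (hlam : 0 ≤ lam) (X : Matrix (Fin n) (Fin p) ℝ)
    {B : Matrix (Fin p) (Fin T) ℝ} {j : Fin p} (hB : B j = 0) (t : Fin T) (β : Fin T × Fin p) :
    pinv (Mmat n lam 0 X B) β (t, j) = 0 ∧ pinv (Mmat n lam 0 X B) (t, j) β = 0 := by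
  have hM := posSemidef_Mmat hlam X B
  have hcol := pinv_apply_eq_zero hM.1
    (apply_eq_zero_of_diag_eq_zero hM (Mmat_apply_self_eq_zero X hB t))
  refine ⟨hcol β, ?_⟩
  rw [← transpose_apply (pinv _), transpose_pinv hM.1]
  exact hcol β

theorem gram_Xsupp_apply_of_ne_zero (X : Matrix (Fin n) (Fin p) ℝ)
    {B : Matrix (Fin p) (Fin T) ℝ} {j j' : Fin p} (hj : B j ≠ 0) (hj' : B j' ≠ 0) :
    ((Xsupp X B)ᵀ * Xsupp X B) j j' = (Xᵀ * X) j j' := by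
  simp [mul_apply, Xsupp, hj, hj']

theorem gram_Xsupp_apply_self_eq_zero (X : Matrix (Fin n) (Fin p) ℝ)
    {B : Matrix (Fin p) (Fin T) ℝ} {l : Fin p} (hl : B l = 0) :
    ((Xsupp X B)ᵀ * Xsupp X B) l l = 0 := by
  simp [mul_apply, Xsupp, hl]

theorem Amat_eq_gramContract (lam tau : ℝ) (X : Matrix (Fin n) (Fin p) ℝ)
    (B : Matrix (Fin p) (Fin T) ℝ) :
    Amat n lam tau X B = gramContract (pinv (Mmat n lam tau X B)) X :=
  rfl

theorem posSemidef_Amat (hlam : 0 ≤ lam) (X : Matrix (Fin n) (Fin p) ℝ)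
    (B : Matrix (Fin p) (Fin T) ℝ) : (Amat n lam 0 X B).PosSemidef := by
  rw [Amat_eq_gramContract]
  exact posSemidef_gramContract (posSemidef_pinv (posSemidef_Mmat hlam X B)) X

theorem dotProduct_Amat_mulVec_le (hlam : 0 ≤ lam) (X : Matrix (Fin n) (Fin p) ℝ)
    (B : Matrix (Fin p) (Fin T) ℝ) (u : Fin T → ℝ) :
    u ⬝ᵥ Amat n lam 0 X B *ᵥ u ≤ nnzRows B * (u ⬝ᵥ u) := by
  classical
  set M := Mmat n lam 0 X B
  obtain ⟨R, hRt, hRR⟩ :=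
    exists_symm_transpose_mul_self_eq (posSemidef_transpose_mul_self (Xsupp X B))
  have hR (l : Fin p) (hl : B l = 0) : R l = 0 := by
    rw [← hRt]
    refine transpose_apply_eq_zero_of_transpose_mul_self_diag ?_
    rw [hRR]
    exact gram_Xsupp_apply_self_eq_zero X hl
  have hS : (M - (1 ⊗ₖ R)ᵀ * (1 ⊗ₖ R)).PosSemidef := by
    rw [← kroneckerMap_transpose, transpose_one, ← mul_kronecker_mul, one_mul, hRR]
    exact posSemidef_Mmat_sub_kronecker_gram hlam X B
  have hterm (l : Fin p) : kronVec u (R l) ⬝ᵥ pinv M *ᵥ kronVec u (R l) ≤ u ⬝ᵥ u := by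
    have := dotProduct_pinv_mulVec_le_of_posSemidef_sub (posSemidef_Mmat hlam X B) hS
      (kronVec u (Pi.single l 1))
    rwa [← kroneckerMap_transpose, transpose_one, kronecker_mulVec_kronVec, one_mulVec,
      mulVec_single_one, kronVec_dotProduct_kronVec, single_one_dotProduct, Pi.single_eq_same,
      mul_one] at this
  rw [Amat_eq_gramContract, gramContract_congr (Z' := R), dotProduct_gramContract_mulVec]
  · calc ∑ l, kronVec u (R l) ⬝ᵥ pinv M *ᵥ kronVec u (R l)
        = ∑ l with B l ≠ 0, kronVec u (R l) ⬝ᵥ pinv M *ᵥ kronVec u (R l) :=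
          (Finset.sum_filter_of_ne (p := fun l => B l ≠ 0)
            fun l _ h hl => h (by simp [hR l hl])).symm
      _ ≤ (nnzRows B : ℝ) * (u ⬝ᵥ u) := by
          rw [nnzRows, ← nsmul_eq_mul]
          exact Finset.sum_le_card_nsmul _ _ _ fun l _ => hterm l
  · intro t t' j j' hG
    have hj : B j ≠ 0 := fun hj => hG (pinv_Mmat_apply_eq_zero hlam X hj t (t', j')).2
    have hj' : B j' ≠ 0 := fun hj' => hG (pinv_Mmat_apply_eq_zero hlam X hj' t' (t, j)).1
    rw [hRR, gram_Xsupp_apply_of_ne_zero X hj hj']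

theorem dotProduct_smul_Amat_mulVec_le (hn : 0 < n) (hlam : 0 ≤ lam)
    (X : Matrix (Fin n) (Fin p) ℝ) (B : Matrix (Fin p) (Fin T) ℝ) (x : Fin T → ℝ) :
    x ⬝ᵥ ((n : ℝ)⁻¹ • Amat n lam 0 X B) *ᵥ x ≤ (nnzRows B / n : ℝ) * (x ⬝ᵥ x) := by
  rw [Matrix.smul_mulVec, dotProduct_smul, smul_eq_mul, div_eq_inv_mul, mul_assoc]
  exact mul_le_mul_of_nonneg_left (dotProduct_Amat_mulVec_le hlam X B x) (by positivity)

theorem opNorm_ImA_le_one (hn : 0 < n) (hlam : 0 ≤ lam) (X : Matrix (Fin n) (Fin p) ℝ)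
    {B : Matrix (Fin p) (Fin T) ℝ} (hB : (nnzRows B : ℝ) ≤ n) : opNorm (ImA n lam 0 X B) ≤ 1 :=
  opNorm_one_sub_le_one ((posSemidef_Amat hlam X B).smul (by positivity)) fun x =>
    (dotProduct_smul_Amat_mulVec_le hn hlam X B x).trans <| mul_le_of_le_one_left
      (dotProduct_self_nonneg x) ((div_le_one (by positivity)).mpr hB)

theorem opNorm_inv_ImA_le (hn : 0 < n) (hlam : 0 ≤ lam) (X : Matrix (Fin n) (Fin p) ℝ)
    {B : Matrix (Fin p) (Fin T) ℝ} {q : ℝ} (hB : (nnzRows B / n : ℝ) ≤ q) (hq : q < 1) :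
    opNorm (ImA n lam 0 X B)⁻¹ ≤ (1 - q)⁻¹ :=
  opNorm_inv_one_sub_le hq fun x => (dotProduct_smul_Amat_mulVec_le hn hlam X B x).trans <|
    mul_le_mul_of_nonneg_right hB (dotProduct_self_nonneg x)

theorem nnzRows_div_le (hn : 0 < n) {B : Matrix (Fin p) (Fin T) ℝ} {c : ℝ}
    (hB : (nnzRows B : ℝ) ≤ n * (1 - c) / 2) : (nnzRows B / n : ℝ) ≤ (1 - c) / 2 :=
  (div_le_iff₀ (by positivity)).2 (by linarith)

theorem opNorm_inv_ImA_le_two_div (hn : 0 < n) (hlam : 0 ≤ lam) (X : Matrix (Fin n) (Fin p) ℝ)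
    {B : Matrix (Fin p) (Fin T) ℝ} {c : ℝ} (hc : 0 < c)
    (hB : (nnzRows B : ℝ) ≤ n * (1 - c) / 2) : opNorm (ImA n lam 0 X B)⁻¹ ≤ 2 / (1 + c) := by
  have h := opNorm_inv_ImA_le hn hlam X (nnzRows_div_le hn hB) (by linarith)
  rwa [show 1 - (1 - c) / 2 = (1 + c) / 2 by ring, inv_div] at h

end GroupLasso

theorem integral_le_of_norm_le {Ω : Type*} [MeasurableSpace Ω] {P : Measure Ω}
    [IsProbabilityMeasure P] {f : Ω → ℝ} {C : ℝ} (h : ∀ ω, ‖f ω‖ ≤ C) : ∫ ω, f ω ∂P ≤ C :=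
  (le_abs_self _).trans ((norm_integral_le_of_norm_le_const (.of_forall h)).trans_eq (by simp))

/-- Lemma: operator norm bounds for the interaction matrix
of the multi-task group Lasso on the sparsity event `U₁`. -/
theorem statement_10 :
    (∀ (n p T : ℕ) (X : Matrix (Fin n) (Fin p) ℝ) (Y : Matrix (Fin n) (Fin T) ℝ)
        (lam c : ℝ), 0 < n → 0 ≤ lam → 0 < c → c < 1 →
      ∀ Bhat : Matrix (Fin p) (Fin T) ℝ,
        (∀ B, objective n lam 0 Y X Bhat ≤ objective n lam 0 Y X B) →
        (nnzRows Bhat : ℝ) ≤ (n : ℝ) * (1 - c) / 2 →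
        (Amat n lam 0 X Bhat).PosSemidef ∧
          opNorm ((n : ℝ)⁻¹ • Amat n lam 0 X Bhat) ≤ (nnzRows Bhat : ℝ) / (n : ℝ) ∧
          (nnzRows Bhat : ℝ) / (n : ℝ) ≤ (1 - c) / 2 ∧
          (1 - c) / 2 < 1 ∧
          opNorm (ImA n lam 0 X Bhat) ≤ 1 ∧
          opNorm ((ImA n lam 0 X Bhat)⁻¹) ≤ 2 / (1 + c)) ∧
    (∀ (n p T : ℕ) (Ω : Type) (_ms : MeasurableSpace Ω) (P : Measure Ω),
      IsProbabilityMeasure P → 0 < n →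
      ∀ (X : Ω → Matrix (Fin n) (Fin p) ℝ) (Y : Ω → Matrix (Fin n) (Fin T) ℝ)
        (lam c : ℝ), 0 ≤ lam → 0 < c → c < 1 →
      ∀ Bhat : Ω → Matrix (Fin p) (Fin T) ℝ, Measurable Bhat →
        (∀ ω B, objective n lam 0 (Y ω) (X ω) (Bhat ω)
            ≤ objective n lam 0 (Y ω) (X ω) B) →
        (∫ ω, (U1set Bhat n c).indicator
            (fun ω' => opNorm ((ImA n lam 0 (X ω') (Bhat ω'))⁻¹)) ω ∂P)
          ≤ 2 / (1 + c)) := by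
  refine ⟨fun n p T X _ lam c hn hlam hc _ B _ hB => ?_, ?_⟩
  · have hA := posSemidef_Amat hlam X B
    refine ⟨hA, ?_, nnzRows_div_le hn hB, by linarith, opNorm_ImA_le_one hn hlam X (by nlinarith),
      opNorm_inv_ImA_le_two_div hn hlam X hc hB⟩
    exact opNorm_le_of_posSemidef (hA.smul (by positivity)) (by positivity)
      (dotProduct_smul_Amat_mulVec_le hn hlam X B)
  · intro n p T Ω _ P _ hn X _ lam c hlam hc _ Bhat _ _
    refine integral_le_of_norm_le fun ω => ?_
    by_cases hω : ω ∈ U1set Bhat n c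
    · rw [Set.indicator_of_mem hω, Real.norm_of_nonneg (opNorm_nonneg _)]
      exact opNorm_inv_ImA_le_two_div hn hlam (X ω) hc hω
    · rw [Set.indicator_of_notMem hω, norm_zero]
      positivity

end MTS
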